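/- Let ζ₁,…,ζ_N be real numbers with empirical measure P̂ = (1/N)∑δ_{ζᵢ} and empirical mean ζ̄ = (1/N)∑ζᵢ. Let ε > 0 and let B_ε(P̂) be the 1-Wasserstein ball (cost |·|, supported on an interval Ξ ⊆ ℝ containing all ζᵢ) of radius ε centered at P̂. Then sup over Q ∈ B_ε(P̂) of E_Q[ζ] equals min{ζ̄ + ε, sup Ξ}. -/

import Mathlib

open MeasureTheory ENNReal

/-- The `p`-Wasserstein distance with cost function `d`, defined as an infimum over
couplings (in `ℝ≥0∞`). -/
noncomputable def wassersteinP {α : Type*} [MeasurableSpace α] (d : α → α → ℝ) (p : ℝ)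
    (μ ν : Measure α) : ℝ≥0∞ :=
  (⨅ (π : Measure (α × α)) (_ : π.map Prod.fst = μ ∧ π.map Prod.snd = ν),
      ∫⁻ z, ENNReal.ofReal (d z.1 z.2 ^ p) ∂π) ^ (1 / p)

/-- The empirical measure of a sample. -/
noncomputable def empMeasure {N : ℕ} (ζ : Fin N → ℝ) : Measure ℝ :=
  ((N : ℝ≥0∞)⁻¹) • ∑ i, Measure.dirac (ζ i)

variable {N : ℕ}

lemma empMeasure_prob (hN : 0 < N) (ζ : Fin N → ℝ) : IsProbabilityMeasure (empMeasure ζ) := by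
  constructor
  simp only [empMeasure, Measure.smul_apply, Measure.coe_finset_sum, Finset.sum_apply,
    Measure.dirac_apply_of_mem (Set.mem_univ _), Finset.sum_const, Finset.card_univ,
    Fintype.card_fin, nsmul_eq_mul, mul_one, smul_eq_mul]
  exact ENNReal.inv_mul_cancel (by exact_mod_cast hN.ne') (natCast_ne_top N)

lemma integrable_dirac'' {f : ℝ → ℝ} (hf : StronglyMeasurable f) (a : ℝ) :
    Integrable f (Measure.dirac a) := by
  refine ⟨hf.aestronglyMeasurable, ?_⟩
  rw [HasFiniteIntegral, lintegral_dirac' _ hf.measurable.enorm]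
  exact enorm_lt_top

lemma integrable_empMeasure (hN : 0 < N) (ζ : Fin N → ℝ) {f : ℝ → ℝ} (hf : StronglyMeasurable f) :
    Integrable f (empMeasure ζ) := by
  unfold empMeasure
  refine Integrable.smul_measure ?_ (by simp [hN.ne'])
  exact integrable_finset_sum_measure.2 fun i _ => integrable_dirac'' hf _

lemma integral_empMeasure (hN : 0 < N) (ζ : Fin N → ℝ) {f : ℝ → ℝ} (hf : StronglyMeasurable f) :
    ∫ x, f x ∂(empMeasure ζ) = (∑ i, f (ζ i)) / N := by
  unfold empMeasure
  rw [integral_smul_measure, integral_finset_sum_measure (fun i _ => ?_)]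
  · simp [integral_dirac' _ _ hf, ENNReal.toReal_inv, div_eq_inv_mul]
  · exact integrable_dirac'' hf _

lemma lintegral_empMeasure (ζ : Fin N → ℝ) {f : ℝ → ℝ≥0∞} (hf : Measurable f) :
    ∫⁻ x, f x ∂(empMeasure ζ) = (N : ℝ≥0∞)⁻¹ * ∑ i, f (ζ i) := by
  unfold empMeasure
  rw [lintegral_smul_measure, lintegral_finset_sum_measure]
  simp [lintegral_dirac' _ hf]

lemma mean_le_of_coupling (hN : 0 < N) (ζ : Fin N → ℝ) {Q : Measure ℝ}
    {π : Measure (ℝ × ℝ)} (h1 : π.map Prod.fst = empMeasure ζ) (h2 : π.map Prod.snd = Q)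
    {c : ℝ} (hc : 0 ≤ c)
    (hcost : ∫⁻ z, ENNReal.ofReal |z.1 - z.2| ∂π ≤ ENNReal.ofReal c) :
    Integrable (fun x => x) Q ∧ ∫ x, x ∂Q ≤ (∑ i, ζ i) / N + c := by
  have hf : Integrable (fun z : ℝ × ℝ => z.1) π := by
    have := (integrable_map_measure aestronglyMeasurable_id
      measurable_fst.aemeasurable).1 (h1 ▸ integrable_empMeasure hN ζ stronglyMeasurable_id)
    simpa [Function.comp] using this
  have hd : Integrable (fun z : ℝ × ℝ => z.2 - z.1) π := by
    refine ⟨(measurable_snd.sub measurable_fst).aestronglyMeasurable, ?_⟩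
    rw [HasFiniteIntegral]
    have heq : ∀ z : ℝ × ℝ, (‖z.2 - z.1‖₊ : ℝ≥0∞) = ENNReal.ofReal |z.1 - z.2| := by
      intro z
      rw [abs_sub_comm, ← Real.norm_eq_abs, ofReal_norm, enorm_eq_nnnorm]
    calc ∫⁻ z, (‖z.2 - z.1‖₊ : ℝ≥0∞) ∂π = ∫⁻ z, ENNReal.ofReal |z.1 - z.2| ∂π := by
          simp_rw [heq]
      _ ≤ ENNReal.ofReal c := hcost
      _ < ⊤ := ofReal_lt_top
  have hg : Integrable (fun z : ℝ × ℝ => z.2) π :=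
    (hf.add hd).congr (Filter.Eventually.of_forall fun z => by simp)
  have hQint : Integrable (fun x => x) Q := by
    rw [← h2]
    exact (integrable_map_measure aestronglyMeasurable_id measurable_snd.aemeasurable).2 hg
  refine ⟨hQint, ?_⟩
  have e1 : ∫ x, x ∂Q = ∫ z, z.2 ∂π := by
    rw [← h2]
    exact integral_map measurable_snd.aemeasurable aestronglyMeasurable_id
  have e2 : ∫ z, z.1 ∂π = (∑ i, ζ i) / N := by
    have h : ∫ x, x ∂(π.map Prod.fst) = ∫ z, z.1 ∂π :=
      integral_map measurable_fst.aemeasurable aestronglyMeasurable_id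
    rw [← h, h1]
    exact integral_empMeasure hN ζ stronglyMeasurable_id
  have e3 : ∫ z, (z.2 - z.1) ∂π ≤ c := by
    have habs : ∫ z, (z.2 - z.1) ∂π ≤ ∫ z, |z.2 - z.1| ∂π :=
      integral_mono hd hd.abs fun z => le_abs_self _
    have heq2 : ∫ z, |z.2 - z.1| ∂π = (∫⁻ z, ENNReal.ofReal |z.1 - z.2| ∂π).toReal := by
      rw [integral_eq_lintegral_of_nonneg_ae (Filter.Eventually.of_forall fun z => abs_nonneg _)
        hd.abs.aestronglyMeasurable]
      congr 1
      exact lintegral_congr fun z => by rw [abs_sub_comm]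
    have := ENNReal.toReal_mono ofReal_ne_top hcost
    rw [ENNReal.toReal_ofReal hc] at this
    linarith [heq2 ▸ habs]
  calc ∫ x, x ∂Q = ∫ z, (z.1 + (z.2 - z.1)) ∂π := by rw [e1]; congr 1; ext z; ring
    _ = ∫ z, z.1 ∂π + ∫ z, (z.2 - z.1) ∂π := integral_add hf hd
    _ ≤ (∑ i, ζ i) / N + c := by rw [e2]; linarith

lemma wasserstein1_def (μ ν : Measure ℝ) :
    wassersteinP (fun a b => |a - b|) 1 μ ν =
      ⨅ (π : Measure (ℝ × ℝ)) (_ : π.map Prod.fst = μ ∧ π.map Prod.snd = ν),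
        ∫⁻ z, ENNReal.ofReal |z.1 - z.2| ∂π := by
  unfold wassersteinP
  norm_num [Real.rpow_one]

lemma exists_coupling {μ Q : Measure ℝ} {ε : ℝ} (hε : 0 < ε)
    (hW : wassersteinP (fun a b => |a - b|) 1 μ Q ≤ ENNReal.ofReal ε)
    {δ : ℝ} (hδ : 0 < δ) :
    ∃ π : Measure (ℝ × ℝ), π.map Prod.fst = μ ∧ π.map Prod.snd = Q ∧
      ∫⁻ z, ENNReal.ofReal |z.1 - z.2| ∂π ≤ ENNReal.ofReal (ε + δ) := by
  rw [wasserstein1_def] at hW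
  have hlt : (⨅ (π : Measure (ℝ × ℝ)) (_ : π.map Prod.fst = μ ∧ π.map Prod.snd = Q),
      ∫⁻ z, ENNReal.ofReal |z.1 - z.2| ∂π) < ENNReal.ofReal (ε + δ) := by
    refine hW.trans_lt ?_
    rw [ENNReal.ofReal_lt_ofReal_iff (by linarith)]
    linarith
  rw [iInf_lt_iff] at hlt
  obtain ⟨π, hπ⟩ := hlt
  rw [iInf_lt_iff] at hπ
  obtain ⟨⟨h1, h2⟩, hc⟩ := hπ
  exact ⟨π, h1, h2, hc.le⟩

lemma empMeasure_compl (ζ : Fin N → ℝ) {Ξ : Set ℝ} (hmem : ∀ i, ζ i ∈ Ξ) :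
    empMeasure ζ Ξᶜ = 0 := by
  unfold empMeasure
  simp only [Measure.smul_apply, Measure.coe_finset_sum, Finset.sum_apply, smul_eq_mul]
  rw [Finset.sum_eq_zero fun i _ => ?_, mul_zero]
  simp [Measure.dirac_apply, Set.indicator_of_notMem, hmem i]

lemma exists_good_Q (hN : 0 < N) (ζ : Fin N → ℝ) {ε : ℝ} (hε : 0 < ε) {Ξ : Set ℝ}
    (hmem : ∀ i, ζ i ∈ Ξ) {t : ℝ} (htΞ : t ∈ Ξ) (ht : ∀ i, ζ i ≤ t) :
    ∃ Q : Measure ℝ, IsProbabilityMeasure Q ∧ Q Ξᶜ = 0 ∧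
      wassersteinP (fun a b => |a - b|) 1 (empMeasure ζ) Q ≤ ENNReal.ofReal ε ∧
      min t ((∑ i, ζ i) / N + ε) ≤ ∫ x, x ∂Q := by
  set m : ℝ := (∑ i, ζ i) / N with hm
  have hNR : (0:ℝ) < N := by exact_mod_cast hN
  have hmt : m ≤ t := by
    rw [hm, div_le_iff₀ hNR]
    calc ∑ i, ζ i ≤ ∑ _i : Fin N, t := Finset.sum_le_sum fun i _ => ht i
      _ = t * N := by simp [mul_comm]
  set u : ℝ := t - m with hu
  have hu0 : 0 ≤ u := by simp [hu]; linarith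
  set θ : ℝ := min 1 (ε / u) with hθ
  have hθ0 : 0 ≤ θ := le_min zero_le_one (div_nonneg hε.le hu0)
  have hθ1 : θ ≤ 1 := min_le_left _ _
  have hθu : θ * u = min u ε := by
    rcases eq_or_lt_of_le hu0 with h | h
    · rw [← h, mul_zero, min_eq_left hε.le]
    · rw [hθ, min_mul_of_nonneg _ _ hu0, one_mul, div_mul_cancel₀ _ h.ne']
  have hProb := empMeasure_prob hN ζ
  refine ⟨ENNReal.ofReal (1 - θ) • empMeasure ζ + ENNReal.ofReal θ • Measure.dirac t, ?_, ?_, ?_, ?_⟩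
  · constructor
    simp only [Measure.add_apply, Measure.smul_apply, smul_eq_mul, measure_univ, mul_one]
    rw [← ENNReal.ofReal_add (by linarith) hθ0]
    norm_num
  · simp only [Measure.add_apply, Measure.smul_apply, smul_eq_mul,
      empMeasure_compl ζ hmem, mul_zero, zero_add]
    simp [Measure.dirac_apply, Set.indicator_of_notMem, htΞ]
  · -- Wasserstein bound
    set π : Measure (ℝ × ℝ) :=
      ENNReal.ofReal (1 - θ) • (empMeasure ζ).map (fun x => (x, x)) +
      ENNReal.ofReal θ • (empMeasure ζ).map (fun x => (x, t)) with hπ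
    have hmeas1 : Measurable (fun x : ℝ => (x, x)) := measurable_id.prodMk measurable_id
    have hmeas2 : Measurable (fun x : ℝ => (x, t)) := measurable_id.prodMk measurable_const
    have h1 : π.map Prod.fst = empMeasure ζ := by
      rw [hπ, Measure.map_add _ _ measurable_fst, Measure.map_smul, Measure.map_smul,
        Measure.map_map measurable_fst hmeas1, Measure.map_map measurable_fst hmeas2]
      have : (Prod.fst ∘ fun x : ℝ => (x, x)) = id := rfl
      rw [this]
      have : (Prod.fst ∘ fun x : ℝ => (x, t)) = id := rfl
      rw [this, Measure.map_id, ← add_smul, ← ENNReal.ofReal_add (by linarith) hθ0]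
      norm_num
    have h2 : π.map Prod.snd =
        ENNReal.ofReal (1 - θ) • empMeasure ζ + ENNReal.ofReal θ • Measure.dirac t := by
      rw [hπ, Measure.map_add _ _ measurable_snd, Measure.map_smul, Measure.map_smul,
        Measure.map_map measurable_snd hmeas1, Measure.map_map measurable_snd hmeas2]
      have e1 : (Prod.snd ∘ fun x : ℝ => (x, x)) = id := rfl
      have e2 : (Prod.snd ∘ fun x : ℝ => (x, t)) = fun _ => t := rfl
      rw [e1, e2, Measure.map_id, Measure.map_const, measure_univ, one_smul]
    have hcostf : Measurable (fun z : ℝ × ℝ => ENNReal.ofReal |z.1 - z.2|) :=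
      (measurable_fst.sub measurable_snd).abs.ennreal_ofReal
    have hcost : ∫⁻ z, ENNReal.ofReal |z.1 - z.2| ∂π ≤ ENNReal.ofReal ε := by
      rw [hπ, lintegral_add_measure, lintegral_smul_measure, lintegral_smul_measure,
        lintegral_map hcostf hmeas1, lintegral_map hcostf hmeas2]
      simp only [sub_self, abs_zero, ENNReal.ofReal_zero, lintegral_zero, mul_zero, zero_add]
      have : ∫⁻ x, ENNReal.ofReal |x - t| ∂(empMeasure ζ) = ENNReal.ofReal u := by
        have hle : ∫⁻ x, ENNReal.ofReal |x - t| ∂(empMeasure ζ) =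
            (N : ℝ≥0∞)⁻¹ * ∑ i, ENNReal.ofReal |ζ i - t| :=
          lintegral_empMeasure ζ (by fun_prop)
        rw [hle]
        have habs : ∀ i, |ζ i - t| = t - ζ i := fun i => by
          rw [abs_sub_comm, abs_of_nonneg (by linarith [ht i])]
        simp_rw [habs]
        rw [← ENNReal.ofReal_sum_of_nonneg (fun i _ => by linarith [ht i])]
        have hsum : ∑ i, (t - ζ i) = (N : ℝ) * u := by
          rw [Finset.sum_sub_distrib, Finset.sum_const, Finset.card_univ, Fintype.card_fin,
            nsmul_eq_mul, hu, hm]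
          field_simp
        rw [hsum, ENNReal.ofReal_mul (by positivity), ENNReal.ofReal_natCast,
          ← mul_assoc, ENNReal.inv_mul_cancel (by exact_mod_cast hN.ne') (natCast_ne_top N),
          one_mul]
      rw [this, smul_zero, zero_add, smul_eq_mul, ← ENNReal.ofReal_mul hθ0, hθu]
      exact ENNReal.ofReal_le_ofReal (min_le_right _ _)
    rw [wasserstein1_def]
    exact le_trans (iInf₂_le π ⟨h1, h2⟩) hcost
  · -- mean
    have hint1 : Integrable (fun x : ℝ => x) (ENNReal.ofReal (1 - θ) • empMeasure ζ) :=
      (integrable_empMeasure hN ζ stronglyMeasurable_id).smul_measure ofReal_ne_top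
    have hint2 : Integrable (fun x : ℝ => x) (ENNReal.ofReal θ • Measure.dirac t) :=
      (integrable_dirac'' stronglyMeasurable_id t).smul_measure ofReal_ne_top
    have hIemp : ∫ x, x ∂(empMeasure ζ) = (∑ i, ζ i) / N :=
      integral_empMeasure hN ζ stronglyMeasurable_id
    have hIdirac : ∫ x, x ∂(Measure.dirac t) = t := integral_dirac _ t
    rw [integral_add_measure hint1 hint2, integral_smul_measure, integral_smul_measure,
      ENNReal.toReal_ofReal (by linarith), ENNReal.toReal_ofReal hθ0, hIemp, hIdirac]
    have : (1 - θ) • ((∑ i, ζ i) / (N:ℝ)) + θ • t = min t (m + ε) := by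
      rw [smul_eq_mul, smul_eq_mul, ← hm]
      have : (1 - θ) * m + θ * t = m + θ * u := by rw [hu]; ring
      rw [this, hθu]
      rcases le_total u ε with h | h
      · have h' : u ≤ ε := h
        rw [min_eq_left h, min_eq_left (show t ≤ m + ε by rw [hu] at h'; linarith), hu]; ring
      · have h' : ε ≤ u := h
        rw [min_eq_right h, min_eq_right (show m + ε ≤ t by rw [hu] at h'; linarith)]
    rw [this]

/-- The sup of `E_Q[ζ]` over the 1-Wasserstein ball of radius `ε` around the empirical
measure (measures supported on the interval `Ξ`) is `min (ζ̄ + ε) (sup Ξ)`. -/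
theorem stmt1 {N : ℕ} (hN : 0 < N) (ζ : Fin N → ℝ) (ε : ℝ) (hε : 0 < ε)
    (Ξ : Set ℝ) (hΞ : Ξ.OrdConnected) (hmem : ∀ i, ζ i ∈ Ξ) :
    (⨆ Q ∈ {Q : Measure ℝ | IsProbabilityMeasure Q ∧ Q Ξᶜ = 0 ∧
        wassersteinP (fun a b => |a - b|) 1 (empMeasure ζ) Q ≤ ENNReal.ofReal ε},
      ((∫ x, x ∂Q : ℝ) : EReal)) =
    min (((∑ i, ζ i) / N + ε : ℝ) : EReal) (sSup (Real.toEReal '' Ξ)) := by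
  have hNR : (0:ℝ) < N := by exact_mod_cast hN
  apply le_antisymm
  · refine iSup₂_le fun Q hQ => ?_
    obtain ⟨hprob, hsupp, hW⟩ := hQ
    obtain ⟨π₀, h1₀, h2₀, hc₀⟩ := exists_coupling hε hW one_pos
    have hQint := (mean_le_of_coupling hN ζ h1₀ h2₀ (by linarith) hc₀).1
    refine le_min ?_ ?_
    · rw [EReal.coe_le_coe_iff]
      refine le_of_forall_pos_le_add fun δ hδ => ?_
      obtain ⟨π, h1, h2, hc⟩ := exists_coupling hε hW hδ
      have := (mean_le_of_coupling hN ζ h1 h2 (by linarith) hc).2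
      linarith
    · by_cases hStop : sSup (Real.toEReal '' Ξ) = ⊤
      · rw [hStop]; exact le_top
      · have hbot : sSup (Real.toEReal '' Ξ) ≠ ⊥ := by
          refine ne_bot_of_le_ne_bot ?_ (le_sSup (Set.mem_image_of_mem _ (hmem ⟨0, hN⟩)))
          simp
        set b : ℝ := (sSup (Real.toEReal '' Ξ)).toReal with hbdef
        have hb : (b : EReal) = sSup (Real.toEReal '' Ξ) := EReal.coe_toReal hStop hbot
        have hxb : ∀ x ∈ Ξ, x ≤ b := fun x hx => by
          have h := le_sSup (Set.mem_image_of_mem Real.toEReal hx)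
          rw [← hb] at h
          exact_mod_cast h
        have hae : ∀ᵐ x ∂Q, x ≤ b := by
          have h : ∀ᵐ x ∂Q, x ∈ Ξ := by
            rw [ae_iff]
            exact hsupp
          filter_upwards [h] with x hx using hxb x hx
        have hle : ∫ x, x ∂Q ≤ b := by
          have h := integral_mono_ae hQint (integrable_const b) hae
          rwa [integral_const, probReal_univ, one_smul] at h
        calc ((∫ x, x ∂Q : ℝ) : EReal) ≤ (b : EReal) := by exact_mod_cast hle
          _ = _ := hb
  · by_contra hcon
    rw [not_le] at hcon
    obtain ⟨m, hm1, hm2⟩ := EReal.exists_between_coe_real hcon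
    have hmS : (m : EReal) < sSup (Real.toEReal '' Ξ) := hm2.trans_le (min_le_right _ _)
    have hmc : m < (∑ i, ζ i) / N + ε := by
      have h := hm2.trans_le (min_le_left _ _)
      exact_mod_cast h
    obtain ⟨y, hyim, hy⟩ := lt_sSup_iff.1 hmS
    obtain ⟨x, hxΞ, rfl⟩ := hyim
    have hmx : m < x := by exact_mod_cast hy
    haveI : Nonempty (Fin N) := ⟨⟨0, hN⟩⟩
    have hne : (Finset.univ : Finset (Fin N)).Nonempty := Finset.univ_nonempty
    set t : ℝ := max x (Finset.univ.sup' hne ζ) with htdef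
    have htΞ : t ∈ Ξ := by
      rcases max_choice x (Finset.univ.sup' hne ζ) with h | h
      · rw [htdef, h]; exact hxΞ
      · rw [htdef, h]
        obtain ⟨i, _, hi⟩ := Finset.exists_mem_eq_sup' hne ζ
        rw [hi]; exact hmem i
    have ht : ∀ i, ζ i ≤ t :=
      fun i => le_trans (Finset.le_sup' ζ (Finset.mem_univ i)) (le_max_right _ _)
    obtain ⟨Q, hq1, hq2, hq3, hq4⟩ := exists_good_Q hN ζ hε hmem htΞ ht
    have hmean : m ≤ ∫ x, x ∂Q :=
      le_trans (le_min (hmx.le.trans (le_max_left _ _)) hmc.le) hq4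
    have hfin : (m : EReal) ≤ ⨆ Q ∈ {Q : Measure ℝ | IsProbabilityMeasure Q ∧ Q Ξᶜ = 0 ∧
        wassersteinP (fun a b => |a - b|) 1 (empMeasure ζ) Q ≤ ENNReal.ofReal ε},
        ((∫ x, x ∂Q : ℝ) : EReal) :=
      le_iSup₂_of_le Q ⟨hq1, hq2, hq3⟩ (by exact_mod_cast hmean)
    exact absurd hfin (not_le.2 hm1)
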